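/- arXiv:math/0605422 — 2 statements merged into one kernel-verified Lean document; each statement's English description precedes it below -/
import Mathlib

section
/- Let γ ∈ (0,α). Assume: (i) condition (C1) with exponent γ: there is c0 > 0 such that G(A_s(Q), z0) ≥ c0·(s/r)^γ·G(A_r(Q), z0) for all Q ∈ ∂D, r ∈ (0,R) and s ∈ (0,r); (ii) the Carleson estimate: there is c > 1 such that G(x,y) ≤ c·G(A_r(Q), y) whenever Q ∈ ∂D, r ∈ (0, κR/4), y ∈ D \ closure(B(Q,4r)) and x ∈ D ∩ B(Q,r); (iii) the comparability of g on 𝓑: there is c ≥ 1 such that g(A1) ≤ c·g(A2) for all x, y ∈ D and A1, A2 ∈ 𝓑(x,y); (iv) the boundary decay lower bound: there is c > 0 such that min(g(A_{r(x,y)}(Q_x)), g(A_{r(x,y)}(Q_y))) ≥ c·r(x,y)^γ for all x, y ∈ D with r(x,y) < ε1. Then there exists a constant c > 0 such that for all x, y, z ∈ D and all A_{x,y} ∈ 𝓑(x,y), A_{y,z} ∈ 𝓑(y,z): g(A_{y,z}) ≤ c·max((r(y,z)/r(x,y))^γ, 1)·g(A_{x,y}). -/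
open Metric Set MeasureTheory

/-- Distance to the boundary of `D`. -/
noncomputable def rho {d : ℕ} (D : Set (EuclideanSpace ℝ (Fin d)))
    (x : EuclideanSpace ℝ (Fin d)) : ℝ :=
  Metric.infDist x (frontier D)

/-- `r(x,y) := max(ρ_D(x), ρ_D(y), |x-y|)`. -/
noncomputable def rxy {d : ℕ} (D : Set (EuclideanSpace ℝ (Fin d)))
    (x y : EuclideanSpace ℝ (Fin d)) : ℝ :=
  max (max (rho D x) (rho D y)) (dist x y)

/-- The set `𝓑(x,y)`. -/
noncomputable def BB {d : ℕ} (D : Set (EuclideanSpace ℝ (Fin d))) (M ε1 : ℝ)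
    (z0 x y : EuclideanSpace ℝ (Fin d)) : Set (EuclideanSpace ℝ (Fin d)) :=
  if rxy D x y < ε1 then
    {A | A ∈ D ∧ rxy D x y / M < rho D A ∧ max (dist x A) (dist y A) < 5 * rxy D x y}
  else {z0}

open Classical in
/-- `g(x) := min(G(x,z0), C1)`, with the convention `g(z0) = C1` (since `G(z0,z0) = ∞`). -/
noncomputable def gfun {d : ℕ} (G : EuclideanSpace ℝ (Fin d) → EuclideanSpace ℝ (Fin d) → ℝ)
    (z0 : EuclideanSpace ℝ (Fin d)) (C1 : ℝ) (x : EuclideanSpace ℝ (Fin d)) : ℝ :=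
  if x = z0 then C1 else min (G x z0) C1


/-!
Write `a = r(x,y)` and `b = r(y,z)`. If `a ≥ ε1` then `𝓑(x,y) = {z0}` and `g(A_{x,y}) = C1`
bounds `g` everywhere. Otherwise, by the comparability of `g` on `𝓑(x,y)`, it suffices to compare
`g(A_{y,z})` with `g(P_a)` for the fat point `P_a = A_a(Q_y) ∈ 𝓑(x,y)`. If `b < ε1`, then also
`P_b = A_b(Q_y) ∈ 𝓑(y,z)`; both points are so close to `∂D` that `g = G(·, z0)` there, and along
the fat points of `Q_y` the Carleson estimate gives `G(P_b) ≲ G(P_a)` for `b ≤ a` while (C1) gives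
`G(P_b) ≲ (b/a)^γ G(P_a)` for `b > a`. If `b ≥ ε1`, then `A_{y,z} = z0`, and the boundary decay
bound `g(P_a) ≳ a^γ` gives `C1 ≲ (b/a)^γ g(P_a)`.
-/

section Geometry

variable {d : ℕ} {D : Set (EuclideanSpace ℝ (Fin d))}

theorem rho_le_dist {Q : EuclideanSpace ℝ (Fin d)} (hQ : Q ∈ frontier D)
    (x : EuclideanSpace ℝ (Fin d)) : rho D x ≤ dist x Q :=
  infDist_le_dist_of_mem hQ

theorem rho_pos (hD : IsOpen D) (hfr : (frontier D).Nonempty) {x : EuclideanSpace ℝ (Fin d)}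
    (hx : x ∈ D) : 0 < rho D x :=
  (isClosed_frontier.notMem_iff_infDist_pos hfr).1 fun h => (hD.frontier_eq ▸ h).2 hx

theorem le_rho_of_ball_subset (hD : IsOpen D) (hfr : (frontier D).Nonempty)
    {x : EuclideanSpace ℝ (Fin d)} {r : ℝ} (h : ball x r ⊆ D) : r ≤ rho D x := by
  by_contra! hlt
  obtain ⟨w, hw, hxw⟩ := (infDist_lt_iff hfr).1 hlt
  exact (hD.frontier_eq ▸ hw).2 (h (mem_ball'.2 hxw))

theorem rxy_comm (x y : EuclideanSpace ℝ (Fin d)) : rxy D x y = rxy D y x := by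
  rw [rxy, rxy, max_comm (rho D x), dist_comm]

theorem rho_le_rxy (x y : EuclideanSpace ℝ (Fin d)) : rho D x ≤ rxy D x y :=
  (le_max_left _ _).trans (le_max_left _ _)

theorem dist_le_rxy (x y : EuclideanSpace ℝ (Fin d)) : dist x y ≤ rxy D x y :=
  le_max_right _ _

theorem rxy_pos (hD : IsOpen D) (hfr : (frontier D).Nonempty) {x : EuclideanSpace ℝ (Fin d)}
    (hx : x ∈ D) (y : EuclideanSpace ℝ (Fin d)) : 0 < rxy D x y :=
  (rho_pos hD hfr hx).trans_le (rho_le_rxy x y)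

theorem BB_comm (M ε1 : ℝ) (z0 x y : EuclideanSpace ℝ (Fin d)) :
    BB D M ε1 z0 x y = BB D M ε1 z0 y x := by
  simp only [BB, rxy_comm x y, max_comm (dist x _)]

theorem BB_of_not_lt {M ε1 : ℝ} {z0 x y : EuclideanSpace ℝ (Fin d)} (h : ¬rxy D x y < ε1) :
    BB D M ε1 z0 x y = {z0} :=
  if_neg h

theorem mem_BB_of_dist_nearest_lt {κ M ε1 : ℝ} (hκ : 0 < κ) (hκM : 1 < κ * M)
    {z0 x y Q P : EuclideanSpace ℝ (Fin d)} (hr : rxy D x y < ε1) (hQ : dist x Q = rho D x)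
    (hP : P ∈ D) (hPQ : dist P Q < rxy D x y) (hρP : κ * rxy D x y ≤ rho D P) :
    P ∈ BB D M ε1 z0 x y := by
  set r := rxy D x y
  have hxP : dist x P < 2 * r := by
    calc dist x P ≤ dist x Q + dist P Q := dist_triangle_right _ _ _
      _ < r + r := add_lt_add_of_le_of_lt (hQ ▸ rho_le_rxy x y) hPQ
      _ = 2 * r := by ring
  have hyP : dist y P < 3 * r := by
    calc dist y P ≤ dist x y + dist x P := dist_triangle_left _ _ _
      _ < r + 2 * r := add_lt_add_of_le_of_lt (dist_le_rxy x y) hxP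
      _ = 3 * r := by ring
  have hr0 : 0 < r := by linarith [dist_nonneg (x := x) (y := P)]
  have hM : 0 < M := pos_of_mul_pos_right (one_pos.trans hκM) hκ.le
  rw [BB, if_pos hr]
  refine ⟨hP, ?_, max_lt (by linarith) (by linarith)⟩
  rw [div_lt_iff₀ hM]
  nlinarith

end Geometry

/-- `A Q r` witnesses that `D` is `κ`-fat with characteristics `(R, κ)`. -/
structure IsKappaFat {d : ℕ} (D : Set (EuclideanSpace ℝ (Fin d))) (κ R : ℝ)
    (A : EuclideanSpace ℝ (Fin d) → ℝ → EuclideanSpace ℝ (Fin d)) : Prop where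
  isOpen : IsOpen D
  kappa_pos : 0 < κ
  fat : ∀ Q ∈ frontier D, ∀ r : ℝ, 0 < r → r < R →
    A Q r ∈ D ∧ ball (A Q r) (κ * r) ⊆ D ∩ ball Q r

namespace IsKappaFat

variable {d : ℕ} {D : Set (EuclideanSpace ℝ (Fin d))} {κ R : ℝ}
  {A : EuclideanSpace ℝ (Fin d) → ℝ → EuclideanSpace ℝ (Fin d)}

theorem fat_point (hD : IsKappaFat D κ R A) {Q : EuclideanSpace ℝ (Fin d)} (hQ : Q ∈ frontier D)
    {t : ℝ} (ht : 0 < t) (htR : t < R) :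
    A Q t ∈ D ∧ dist (A Q t) Q < t ∧ κ * t ≤ rho D (A Q t) := by
  obtain ⟨hAD, hball⟩ := hD.fat Q hQ t ht htR
  exact ⟨hAD, mem_ball.1 (hball (mem_ball_self (mul_pos hD.kappa_pos ht))).2,
    le_rho_of_ball_subset hD.isOpen ⟨Q, hQ⟩ (hball.trans inter_subset_left)⟩

theorem fat_point_mem_BB (hD : IsKappaFat D κ R A)
    {Qb : EuclideanSpace ℝ (Fin d) → EuclideanSpace ℝ (Fin d)}
    (hQb : ∀ x ∈ D, Qb x ∈ frontier D ∧ dist x (Qb x) = rho D x)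
    {M ε1 : ℝ} (hκM : 1 < κ * M) (hε1R : ε1 ≤ R) (z0 : EuclideanSpace ℝ (Fin d))
    {x : EuclideanSpace ℝ (Fin d)} (hx : x ∈ D) (y : EuclideanSpace ℝ (Fin d))
    (hr : rxy D x y < ε1) :
    A (Qb x) (rxy D x y) ∈ BB D M ε1 z0 x y ∧ A (Qb x) (rxy D x y) ∈ D ∧
      rho D (A (Qb x) (rxy D x y)) < rxy D x y := by
  obtain ⟨hQ, hxQ⟩ := hQb x hx
  obtain ⟨hAD, hAQ, hρA⟩ :=
    hD.fat_point hQ (rxy_pos hD.isOpen ⟨_, hQ⟩ hx y) (hr.trans_le hε1R)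
  exact ⟨mem_BB_of_dist_nearest_lt hD.kappa_pos hκM hr hxQ hAD hAQ hρA, hAD,
    (rho_le_dist hQ _).trans_lt hAQ⟩

theorem fat_point_mem_BB_right (hD : IsKappaFat D κ R A)
    {Qb : EuclideanSpace ℝ (Fin d) → EuclideanSpace ℝ (Fin d)}
    (hQb : ∀ x ∈ D, Qb x ∈ frontier D ∧ dist x (Qb x) = rho D x)
    {M ε1 : ℝ} (hκM : 1 < κ * M) (hε1R : ε1 ≤ R) (z0 : EuclideanSpace ℝ (Fin d))
    {y : EuclideanSpace ℝ (Fin d)} (hy : y ∈ D) (x : EuclideanSpace ℝ (Fin d))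
    (hr : rxy D x y < ε1) :
    A (Qb y) (rxy D x y) ∈ BB D M ε1 z0 x y ∧ A (Qb y) (rxy D x y) ∈ D ∧
      rho D (A (Qb y) (rxy D x y)) < rxy D x y := by
  rw [BB_comm, rxy_comm]
  exact hD.fat_point_mem_BB hQb hκM hε1R z0 hy x (by rwa [rxy_comm] at hr)

end IsKappaFat

section GreenFunction

variable {d : ℕ} {G : EuclideanSpace ℝ (Fin d) → EuclideanSpace ℝ (Fin d) → ℝ}
  {z0 : EuclideanSpace ℝ (Fin d)} {C1 : ℝ}

theorem gfun_le (w : EuclideanSpace ℝ (Fin d)) : gfun G z0 C1 w ≤ C1 := by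
  unfold gfun
  split_ifs
  exacts [le_rfl, min_le_right _ _]

theorem gfun_self : gfun G z0 C1 z0 = C1 :=
  if_pos rfl

theorem gfun_eq_of_le {w : EuclideanSpace ℝ (Fin d)} (hw : w ≠ z0) (h : G w z0 ≤ C1) :
    gfun G z0 C1 w = G w z0 := by
  rw [gfun, if_neg hw, min_eq_left h]

theorem half_rpow_eq (ρ p : ℝ) (hρ : 0 ≤ ρ) : (ρ / 2) ^ p = 2 ^ (-p) * ρ ^ p := by
  rw [Real.div_rpow hρ zero_le_two, Real.rpow_neg zero_le_two, div_eq_mul_inv, mul_comm]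

/-- `C1 = C0 (ρ(z0)/2)^(α-d)` bounds `G(·, z0)` outside the ball of radius `ρ(z0)/2` about `z0`. -/
theorem gfun_eq_of_two_rho_lt {D : Set (EuclideanSpace ℝ (Fin d))} {α C0 : ℝ} (hC0 : 0 ≤ C0)
    (hαd : α ≤ d) (hGup : ∀ x ∈ D, ∀ y ∈ D, x ≠ y → G x y ≤ C0 * dist x y ^ (α - d))
    (hC1 : C1 = C0 * (2 : ℝ) ^ ((d : ℝ) - α) * rho D z0 ^ (α - d))
    {w : EuclideanSpace ℝ (Fin d)} (hw : w ∈ D) (hz0 : z0 ∈ D) (hρ : 2 * rho D w < rho D z0) :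
    gfun G z0 C1 w = G w z0 := by
  have hρw : 0 ≤ rho D w := infDist_nonneg
  have hfar : rho D z0 / 2 ≤ dist w z0 := by
    have : rho D z0 ≤ rho D w + dist z0 w := infDist_le_infDist_add_dist
    rw [dist_comm]; linarith
  have hwz : w ≠ z0 := dist_pos.1 (by linarith)
  refine gfun_eq_of_le hwz ?_
  calc G w z0 ≤ C0 * dist w z0 ^ (α - d) := hGup w hw z0 hz0 hwz
    _ ≤ C0 * (rho D z0 / 2) ^ (α - d) :=
        mul_le_mul_of_nonneg_left (Real.rpow_le_rpow_of_nonpos (by linarith) hfar (by linarith)) hC0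
    _ = C1 := by rw [half_rpow_eq _ _ (by linarith), neg_sub, hC1, mul_assoc]

end GreenFunction

section Scales

theorem le_max_mul_max_rpow_mul {X Y s t γ c c0 : ℝ} (hs : 0 < s) (ht : 0 < t) (hY : 0 ≤ Y)
    (hc0 : 0 < c0) (hle : t ≤ s → X ≤ c * Y) (hlt : s < t → c0 * (s / t) ^ γ * X ≤ Y) :
    X ≤ max c c0⁻¹ * max ((t / s) ^ γ) 1 * Y := by
  rcases le_or_gt t s with hts | hst
  · calc X ≤ c * Y := hle hts
      _ ≤ max c c0⁻¹ * max ((t / s) ^ γ) 1 * Y := by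
          gcongr
          calc c ≤ max c c0⁻¹ := le_max_left _ _
            _ = max c c0⁻¹ * 1 := (mul_one _).symm
            _ ≤ max c c0⁻¹ * max ((t / s) ^ γ) 1 := by
                gcongr
                exact le_max_right _ _
  · have hinv : (t / s) ^ γ = ((s / t) ^ γ)⁻¹ := by
      rw [← Real.inv_rpow (div_pos hs ht).le, inv_div]
    calc X = c0⁻¹ * (t / s) ^ γ * (c0 * (s / t) ^ γ * X) := by
          rw [hinv]; field_simp
      _ ≤ c0⁻¹ * (t / s) ^ γ * Y := by gcongr; exact hlt hst
      _ ≤ max c c0⁻¹ * max ((t / s) ^ γ) 1 * Y := by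
          gcongr
          · exact le_max_right _ _
          · exact le_max_left _ _

theorem le_div_mul_rpow_div_mul {C k ε a b γ Y : ℝ} (hC : 0 ≤ C) (hk : 0 < k) (hε : 0 < ε)
    (ha : 0 < a) (hb : ε ≤ b) (hγ : 0 ≤ γ) (hY : k * a ^ γ ≤ Y) :
    C ≤ C / (k * ε ^ γ) * (b / a) ^ γ * Y := by
  have hb0 : 0 < b := hε.trans_le hb
  calc C = C / (k * ε ^ γ) * (ε / a) ^ γ * (k * a ^ γ) := by
        rw [Real.div_rpow hε.le ha.le]; field_simp
    _ ≤ C / (k * ε ^ γ) * (b / a) ^ γ * Y := by gcongr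

end Scales

section Comparison

variable {d : ℕ} {D : Set (EuclideanSpace ℝ (Fin d))} {κ R γ M ε1 C1 : ℝ}
  {A : EuclideanSpace ℝ (Fin d) → ℝ → EuclideanSpace ℝ (Fin d)}
  {G : EuclideanSpace ℝ (Fin d) → EuclideanSpace ℝ (Fin d) → ℝ} {z0 : EuclideanSpace ℝ (Fin d)}

theorem G_fat_le_max_rpow_mul (hD : IsKappaFat D κ R A) {c0 : ℝ} (hc0 : 0 < c0)
    (hC1cond : ∀ Q ∈ frontier D, ∀ r : ℝ, 0 < r → r < R → ∀ s : ℝ, 0 < s → s < r →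
      c0 * (s / r) ^ γ * G (A Q r) z0 ≤ G (A Q s) z0)
    {c : ℝ} (hCarl : ∀ Q ∈ frontier D, ∀ r : ℝ, 0 < r → r < κ * R / 4 →
      ∀ y ∈ D \ closure (ball Q (4 * r)), ∀ x ∈ D ∩ ball Q r, G x y ≤ c * G (A Q r) y)
    (hz0 : z0 ∈ D) {Q : EuclideanSpace ℝ (Fin d)} (hQ : Q ∈ frontier D) {s t : ℝ} (hs : 0 < s)
    (ht : 0 < t) (hsκ : s < κ * R / 4) (htR : t < R) (hsz0 : 4 * s < rho D z0)
    (hG : 0 ≤ G (A Q s) z0) :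
    G (A Q t) z0 ≤ max c c0⁻¹ * max ((t / s) ^ γ) 1 * G (A Q s) z0 := by
  refine le_max_mul_max_rpow_mul hs ht hG hc0 (fun hts => ?_)
    (fun hst => hC1cond Q hQ t ht htR s hs hst)
  obtain ⟨hAD, hAQ, -⟩ := hD.fat_point hQ ht htR
  have hz0far : z0 ∉ closure (ball Q (4 * s)) := fun hmem => by
    have := rho_le_dist hQ z0
    have := mem_closedBall.1 (closure_ball_subset_closedBall hmem)
    linarith
  exact hCarl Q hQ s hs hsκ z0 ⟨hz0, hz0far⟩ (A Q t) ⟨hAD, mem_ball.2 (hAQ.trans_le hts)⟩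

theorem gfun_BB_le_mul_gfun_fat (hD : IsKappaFat D κ R A)
    {Qb : EuclideanSpace ℝ (Fin d) → EuclideanSpace ℝ (Fin d)}
    (hQb : ∀ x ∈ D, Qb x ∈ frontier D ∧ dist x (Qb x) = rho D x) (hκM : 1 < κ * M)
    (hε1R : ε1 < R) (hε1κ : ε1 < κ * R / 4) (hε1z0 : 4 * ε1 < rho D z0) (hz0 : z0 ∈ D)
    (hnear : ∀ P ∈ D, rho D P < ε1 → gfun G z0 C1 P = G P z0)
    {c0 : ℝ} (hc0 : 0 < c0)
    (hC1cond : ∀ Q ∈ frontier D, ∀ r : ℝ, 0 < r → r < R → ∀ s : ℝ, 0 < s → s < r →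
      c0 * (s / r) ^ γ * G (A Q r) z0 ≤ G (A Q s) z0)
    {ccar : ℝ} (hCarl : ∀ Q ∈ frontier D, ∀ r : ℝ, 0 < r → r < κ * R / 4 →
      ∀ y ∈ D \ closure (ball Q (4 * r)), ∀ x ∈ D ∩ ball Q r, G x y ≤ ccar * G (A Q r) y)
    {ccm : ℝ} (hccm : 0 ≤ ccm)
    (hcomp : ∀ x ∈ D, ∀ y ∈ D, ∀ A1 ∈ BB D M ε1 z0 x y, ∀ A2 ∈ BB D M ε1 z0 x y,
      gfun G z0 C1 A1 ≤ ccm * gfun G z0 C1 A2)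
    {clw : ℝ} (hclw : 0 < clw) (hC1 : 0 ≤ C1) (hγ : 0 ≤ γ)
    {x y z : EuclideanSpace ℝ (Fin d)} (hy : y ∈ D) (hz : z ∈ D) (ha : rxy D x y < ε1)
    (hlow : clw * rxy D x y ^ γ ≤ gfun G z0 C1 (A (Qb y) (rxy D x y)))
    {Ayz : EuclideanSpace ℝ (Fin d)} (hAyz : Ayz ∈ BB D M ε1 z0 y z) :
    gfun G z0 C1 Ayz ≤ max (max (ccm * max ccar c0⁻¹) (C1 / (clw * ε1 ^ γ))) 1 *
      max ((rxy D y z / rxy D x y) ^ γ) 1 * gfun G z0 C1 (A (Qb y) (rxy D x y)) := by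
  obtain ⟨hQy, -⟩ := hQb y hy
  have ha0 : 0 < rxy D x y := by rw [rxy_comm]; exact rxy_pos hD.isOpen ⟨_, hQy⟩ hy x
  have hgP : 0 ≤ gfun G z0 C1 (A (Qb y) (rxy D x y)) :=
    ((mul_pos hclw (Real.rpow_pos_of_pos ha0 γ)).trans_le hlow).le
  obtain ⟨-, hPD, hPρ⟩ := hD.fat_point_mem_BB_right hQb hκM hε1R.le z0 hy x ha
  have hgPa := hnear _ hPD (hPρ.trans ha)
  by_cases hb : rxy D y z < ε1
  · obtain ⟨hP', hP'D, hP'ρ⟩ := hD.fat_point_mem_BB hQb hκM hε1R.le z0 hy z hb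
    have hray := G_fat_le_max_rpow_mul hD hc0 hC1cond hCarl hz0 hQy ha0
      (rxy_pos hD.isOpen ⟨_, hQy⟩ hy z) (by linarith) (by linarith) (by linarith) (hgPa ▸ hgP)
    calc gfun G z0 C1 Ayz ≤ ccm * gfun G z0 C1 (A (Qb y) (rxy D y z)) :=
          hcomp y hy z hz Ayz hAyz _ hP'
      _ = ccm * G (A (Qb y) (rxy D y z)) z0 := by rw [hnear _ hP'D (hP'ρ.trans hb)]
      _ ≤ ccm * (max ccar c0⁻¹ * max ((rxy D y z / rxy D x y) ^ γ) 1 *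
            G (A (Qb y) (rxy D x y)) z0) := by gcongr
      _ = ccm * max ccar c0⁻¹ * max ((rxy D y z / rxy D x y) ^ γ) 1 *
            gfun G z0 C1 (A (Qb y) (rxy D x y)) := by rw [hgPa]; ring
      _ ≤ _ := by gcongr; exact (le_max_left _ _).trans (le_max_left _ _)
  · rw [BB_of_not_lt hb, mem_singleton_iff] at hAyz
    calc gfun G z0 C1 Ayz = C1 := by rw [hAyz, gfun_self]
      _ ≤ C1 / (clw * ε1 ^ γ) * (rxy D y z / rxy D x y) ^ γ *
            gfun G z0 C1 (A (Qb y) (rxy D x y)) :=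
          le_div_mul_rpow_div_mul hC1 hclw (ha0.trans ha) ha0 (not_lt.1 hb) hγ hlow
      _ ≤ _ := by
          gcongr
          · exact Real.rpow_nonneg (div_nonneg (by linarith [not_lt.1 hb]) ha0.le) γ
          · exact (le_max_right _ _).trans (le_max_left _ _)
          · exact le_max_left _ _

theorem gfun_le_mul_gfun_of_not_lt {M ε1 c : ℝ} (hC1 : 0 ≤ C1) (hc : 1 ≤ c)
    {x y Axy : EuclideanSpace ℝ (Fin d)} (ha : ¬rxy D x y < ε1) (hAxy : Axy ∈ BB D M ε1 z0 x y)
    (w : EuclideanSpace ℝ (Fin d)) : gfun G z0 C1 w ≤ c * gfun G z0 C1 Axy := by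
  rw [BB_of_not_lt ha, mem_singleton_iff] at hAxy
  rw [hAxy, gfun_self]
  exact (gfun_le w).trans (le_mul_of_one_le_left hC1 hc)

end Comparison

theorem stmt10_general
    {d : ℕ}
    {D : Set (EuclideanSpace ℝ (Fin d))} (hDopen : IsOpen D)
    {κ R : ℝ} (hκ0 : 0 < κ) (hR : 0 < R)
    {A : EuclideanSpace ℝ (Fin d) → ℝ → EuclideanSpace ℝ (Fin d)}
    (hfat : ∀ Q ∈ frontier D, ∀ r : ℝ, 0 < r → r < R →
      A Q r ∈ D ∧ ball (A Q r) (κ * r) ⊆ D ∩ ball Q r)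
    {M ε1 : ℝ} (hM : M = 2 / κ) (hε1 : ε1 = R / (12 * M))
    {z0 : EuclideanSpace ℝ (Fin d)} (hz0D : z0 ∈ D)
    (hz0l : 2 * R / M < rho D z0) (hz0u : rho D z0 < R)
    {α : ℝ} (hαd : α < d)
    {G : EuclideanSpace ℝ (Fin d) → EuclideanSpace ℝ (Fin d) → ℝ}
    {C0 : ℝ} (hC0 : 1 ≤ C0)
    (hGup : ∀ x ∈ D, ∀ y ∈ D, x ≠ y → G x y ≤ C0 * dist x y ^ (α - d))
    {C1 : ℝ} (hC1 : C1 = C0 * (2 : ℝ) ^ ((d : ℝ) - α) * rho D z0 ^ (α - d))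
    {Qb : EuclideanSpace ℝ (Fin d) → EuclideanSpace ℝ (Fin d)}
    (hQb : ∀ x ∈ D, Qb x ∈ frontier D ∧ dist x (Qb x) = rho D x)
    {γ : ℝ} (hγ0 : 0 < γ)
    (hC1cond : ∃ c0 > 0, ∀ Q ∈ frontier D, ∀ r : ℝ, 0 < r → r < R → ∀ s : ℝ, 0 < s → s < r →
      c0 * (s / r) ^ γ * G (A Q r) z0 ≤ G (A Q s) z0)
    (hCarl : ∃ c > 1, ∀ Q ∈ frontier D, ∀ r : ℝ, 0 < r → r < κ * R / 4 →
      ∀ y ∈ D \ closure (ball Q (4 * r)), ∀ x ∈ D ∩ ball Q r, G x y ≤ c * G (A Q r) y)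
    (hcomp : ∃ c ≥ 1, ∀ x ∈ D, ∀ y ∈ D, ∀ A1 ∈ BB D M ε1 z0 x y, ∀ A2 ∈ BB D M ε1 z0 x y,
      gfun G z0 C1 A1 ≤ c * gfun G z0 C1 A2)
    (hbdlow : ∃ c > 0, ∀ x ∈ D, ∀ y ∈ D, rxy D x y < ε1 →
      c * rxy D x y ^ γ ≤
        min (gfun G z0 C1 (A (Qb x) (rxy D x y))) (gfun G z0 C1 (A (Qb y) (rxy D x y))))
 :
    ∃ c > 0, ∀ x ∈ D, ∀ y ∈ D, ∀ z ∈ D, ∀ Axy ∈ BB D M ε1 z0 x y, ∀ Ayz ∈ BB D M ε1 z0 y z,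
      gfun G z0 C1 Ayz ≤ c * max ((rxy D y z / rxy D x y) ^ γ) 1 * gfun G z0 C1 Axy := by
  obtain ⟨c0, hc0, hC1cond⟩ := hC1cond
  obtain ⟨ccar, -, hCarl⟩ := hCarl
  obtain ⟨ccm, hccm, hcomp⟩ := hcomp
  obtain ⟨clw, hclw, hbdlow⟩ := hbdlow
  have hD : IsKappaFat D κ R A := ⟨hDopen, hκ0, hfat⟩
  have hκM : κ * M = 2 := by rw [hM]; field_simp
  have hκR : κ * R < rho D z0 := by rwa [hM, show 2 * R / (2 / κ) = κ * R by field_simp] at hz0l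
  have hε1κ : ε1 = κ * R / 24 := by rw [hε1, hM]; field_simp; ring
  have hκR0 : 0 < κ * R := mul_pos hκ0 hR
  have hC1pos : 0 < C1 := by
    rw [hC1]
    exact mul_pos (mul_pos (by linarith) (Real.rpow_pos_of_pos two_pos _))
      (Real.rpow_pos_of_pos (hκR0.trans hκR) _)
  have hnear : ∀ P ∈ D, rho D P < ε1 → gfun G z0 C1 P = G P z0 := fun P hP hρ =>
    gfun_eq_of_two_rho_lt (by linarith) hαd.le hGup hC1 hP hz0D (by linarith)
  set c := max (max (ccm * max ccar c0⁻¹) (C1 / (clw * ε1 ^ γ))) 1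
  have hc : 1 ≤ ccm * c := one_le_mul_of_one_le_of_one_le hccm (le_max_right _ _)
  refine ⟨ccm * c, by positivity, fun x hx y hy z hz Axy hAxy Ayz hAyz => ?_⟩
  set m := max ((rxy D y z / rxy D x y) ^ γ) 1
  by_cases ha : rxy D x y < ε1
  · obtain ⟨hP, -⟩ :=
      hD.fat_point_mem_BB_right (M := M) hQb (by linarith) (by linarith) z0 hy x ha
    calc gfun G z0 C1 Ayz ≤ c * m * gfun G z0 C1 (A (Qb y) (rxy D x y)) :=
          gfun_BB_le_mul_gfun_fat hD hQb (by linarith) (by linarith) (by linarith) (by linarith)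
            hz0D hnear hc0 hC1cond hCarl (by linarith) hcomp hclw hC1pos.le hγ0.le hy hz ha
            ((hbdlow x hx y hy ha).trans (min_le_right _ _)) hAyz
      _ ≤ c * m * (ccm * gfun G z0 C1 Axy) := by gcongr; exact hcomp x hx y hy _ hP Axy hAxy
      _ = ccm * c * m * gfun G z0 C1 Axy := by ring
  · exact gfun_le_mul_gfun_of_not_lt hC1pos.le
      (one_le_mul_of_one_le_of_one_le hc (le_max_right _ _)) ha hAxy Ayz

theorem stmt10
    {d : ℕ} (hd : 2 ≤ d)
    {D : Set (EuclideanSpace ℝ (Fin d))} (hDopen : IsOpen D) (hDbdd : Bornology.IsBounded D)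
    {κ R : ℝ} (hκ0 : 0 < κ) (hκ2 : κ ≤ 1 / 2) (hR : 0 < R)
    {A : EuclideanSpace ℝ (Fin d) → ℝ → EuclideanSpace ℝ (Fin d)}
    (hfat : ∀ Q ∈ frontier D, ∀ r : ℝ, 0 < r → r < R →
      A Q r ∈ D ∧ ball (A Q r) (κ * r) ⊆ D ∩ ball Q r)
    {M ε1 : ℝ} (hM : M = 2 / κ) (hε1 : ε1 = R / (12 * M))
    {z0 : EuclideanSpace ℝ (Fin d)} (hz0D : z0 ∈ D)
    (hz0l : 2 * R / M < rho D z0) (hz0u : rho D z0 < R)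
    {α : ℝ} (hα0 : 0 < α) (hα2 : α < 2) (hαd : α < d)
    {G : EuclideanSpace ℝ (Fin d) → EuclideanSpace ℝ (Fin d) → ℝ}
    (hGsymm : ∀ x y, G x y = G y x)
    (hGpos : ∀ x ∈ D, ∀ y ∈ D, x ≠ y → 0 < G x y)
    {C0 : ℝ} (hC0 : 1 ≤ C0)
    (hGup : ∀ x ∈ D, ∀ y ∈ D, x ≠ y → G x y ≤ C0 * dist x y ^ (α - d))
    (hGlow : ∀ x ∈ D, ∀ y ∈ D, x ≠ y → dist x y ≤ rho D y / 2 →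
      C0⁻¹ * dist x y ^ (α - d) ≤ G x y)
    {C1 : ℝ} (hC1 : C1 = C0 * (2 : ℝ) ^ ((d : ℝ) - α) * rho D z0 ^ (α - d))
    {Qb : EuclideanSpace ℝ (Fin d) → EuclideanSpace ℝ (Fin d)}
    (hQb : ∀ x ∈ D, Qb x ∈ frontier D ∧ dist x (Qb x) = rho D x)
    {γ : ℝ} (hγ0 : 0 < γ) (hγα : γ < α)
    (hC1cond : ∃ c0 > 0, ∀ Q ∈ frontier D, ∀ r : ℝ, 0 < r → r < R → ∀ s : ℝ, 0 < s → s < r →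
      c0 * (s / r) ^ γ * G (A Q r) z0 ≤ G (A Q s) z0)
    (hCarl : ∃ c > 1, ∀ Q ∈ frontier D, ∀ r : ℝ, 0 < r → r < κ * R / 4 →
      ∀ y ∈ D \ closure (ball Q (4 * r)), ∀ x ∈ D ∩ ball Q r, G x y ≤ c * G (A Q r) y)
    (hcomp : ∃ c ≥ 1, ∀ x ∈ D, ∀ y ∈ D, ∀ A1 ∈ BB D M ε1 z0 x y, ∀ A2 ∈ BB D M ε1 z0 x y,
      gfun G z0 C1 A1 ≤ c * gfun G z0 C1 A2)
    (hbdlow : ∃ c > 0, ∀ x ∈ D, ∀ y ∈ D, rxy D x y < ε1 →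
      c * rxy D x y ^ γ ≤
        min (gfun G z0 C1 (A (Qb x) (rxy D x y))) (gfun G z0 C1 (A (Qb y) (rxy D x y))))
 :
    ∃ c > 0, ∀ x ∈ D, ∀ y ∈ D, ∀ z ∈ D, ∀ Axy ∈ BB D M ε1 z0 x y, ∀ Ayz ∈ BB D M ε1 z0 y z,
      gfun G z0 C1 Ayz ≤ c * max ((rxy D y z / rxy D x y) ^ γ) 1 * gfun G z0 C1 Axy :=
  stmt10_general hDopen hκ0 hR hfat hM hε1 hz0D hz0l hz0u hαd hC0 hGup hC1 hQb hγ0 hC1cond hCarl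
    hcomp hbdlow
end

section
/- Let γ > 0. Assume: (i) the domination of g by g on 𝓑: there is c > 0 such that max(g(x), g(y)) ≤ c·g(A) for all x, y ∈ D and A ∈ 𝓑(x,y); (ii) the ratio bound: there is c > 0 such that g(A_{y,z}) ≤ c·max((r(y,z)/r(x,y))^γ, 1)·g(A_{x,y}) for all x, y, z ∈ D and all A_{x,y} ∈ 𝓑(x,y), A_{y,z} ∈ 𝓑(y,z). Then there exists a constant c > 0 such that for all x, y, z, w ∈ D and all A_{x,y} ∈ 𝓑(x,y), A_{z,w} ∈ 𝓑(z,w), A_{x,w} ∈ 𝓑(x,w): g(y)·g(z)·g(A_{x,w})²/(g(A_{x,y})²·g(A_{z,w})²) ≤ c·max(r(x,w)/r(x,y), 1)^γ·max(r(x,w)/r(z,w), 1)^γ. -/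
open Metric Set MeasureTheory

lemma rxy_symm {d : ℕ} (D : Set (EuclideanSpace ℝ (Fin d)))
    (x y : EuclideanSpace ℝ (Fin d)) : rxy D x y = rxy D y x := by
  unfold rxy; rw [max_comm (rho D x), dist_comm]

lemma rxy_nonneg {d : ℕ} (D : Set (EuclideanSpace ℝ (Fin d)))
    (x y : EuclideanSpace ℝ (Fin d)) : 0 ≤ rxy D x y :=
  le_trans dist_nonneg (le_max_right _ _)

lemma BB_symm {d : ℕ} (D : Set (EuclideanSpace ℝ (Fin d))) (M ε1 : ℝ)
    (z0 x y : EuclideanSpace ℝ (Fin d)) : BB D M ε1 z0 x y = BB D M ε1 z0 y x := by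
  unfold BB
  rw [rxy_symm D x y]
  by_cases h : rxy D y x < ε1
  · simp only [if_pos h]
    ext A
    simp only [Set.mem_setOf_eq, max_comm (dist x A) (dist y A)]
  · simp only [if_neg h]

lemma mem_of_mem_BB {d : ℕ} {D : Set (EuclideanSpace ℝ (Fin d))} {M ε1 : ℝ}
    {z0 x y A' : EuclideanSpace ℝ (Fin d)} (hz0 : z0 ∈ D)
    (h : A' ∈ BB D M ε1 z0 x y) : A' ∈ D := by
  unfold BB at h
  split_ifs at h with hc
  · exact h.1
  · simp only [Set.mem_singleton_iff] at h; exact h ▸ hz0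

lemma max_rpow_le {a γ : ℝ} (ha : 0 ≤ a) (hγ : 0 ≤ γ) :
    max (a ^ γ) 1 ≤ (max a 1) ^ γ := by
  apply max_le
  · exact Real.rpow_le_rpow ha (le_max_left _ _) hγ
  · calc (1:ℝ) = (1:ℝ) ^ γ := (Real.one_rpow γ).symm
      _ ≤ (max a 1) ^ γ := Real.rpow_le_rpow zero_le_one (le_max_right a 1) hγ

theorem stmt11
    {d : ℕ} (hd : 2 ≤ d)
    {D : Set (EuclideanSpace ℝ (Fin d))} (hDopen : IsOpen D) (hDbdd : Bornology.IsBounded D)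
    {κ R : ℝ} (hκ0 : 0 < κ) (hκ2 : κ ≤ 1 / 2) (hR : 0 < R)
    {A : EuclideanSpace ℝ (Fin d) → ℝ → EuclideanSpace ℝ (Fin d)}
    (hfat : ∀ Q ∈ frontier D, ∀ r : ℝ, 0 < r → r < R →
      A Q r ∈ D ∧ ball (A Q r) (κ * r) ⊆ D ∩ ball Q r)
    {M ε1 : ℝ} (hM : M = 2 / κ) (hε1 : ε1 = R / (12 * M))
    {z0 : EuclideanSpace ℝ (Fin d)} (hz0D : z0 ∈ D)
    (hz0l : 2 * R / M < rho D z0) (hz0u : rho D z0 < R)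
    {α : ℝ} (hα0 : 0 < α) (hα2 : α < 2) (hαd : α < d)
    {G : EuclideanSpace ℝ (Fin d) → EuclideanSpace ℝ (Fin d) → ℝ}
    (hGsymm : ∀ x y, G x y = G y x)
    (hGpos : ∀ x ∈ D, ∀ y ∈ D, x ≠ y → 0 < G x y)
    {C0 : ℝ} (hC0 : 1 ≤ C0)
    (hGup : ∀ x ∈ D, ∀ y ∈ D, x ≠ y → G x y ≤ C0 * dist x y ^ (α - d))
    (hGlow : ∀ x ∈ D, ∀ y ∈ D, x ≠ y → dist x y ≤ rho D y / 2 →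
      C0⁻¹ * dist x y ^ (α - d) ≤ G x y)
    {C1 : ℝ} (hC1 : C1 = C0 * (2 : ℝ) ^ ((d : ℝ) - α) * rho D z0 ^ (α - d))
    {γ : ℝ} (hγ0 : 0 < γ)
    (hdom : ∃ c > 0, ∀ x ∈ D, ∀ y ∈ D, ∀ A' ∈ BB D M ε1 z0 x y,
      max (gfun G z0 C1 x) (gfun G z0 C1 y) ≤ c * gfun G z0 C1 A')
    (hratio : ∃ c > 0, ∀ x ∈ D, ∀ y ∈ D, ∀ z ∈ D, ∀ Axy ∈ BB D M ε1 z0 x y,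
      ∀ Ayz ∈ BB D M ε1 z0 y z,
      gfun G z0 C1 Ayz ≤ c * max ((rxy D y z / rxy D x y) ^ γ) 1 * gfun G z0 C1 Axy)
 :
    ∃ c > 0, ∀ x ∈ D, ∀ y ∈ D, ∀ z ∈ D, ∀ w ∈ D,
      ∀ Axy ∈ BB D M ε1 z0 x y, ∀ Azw ∈ BB D M ε1 z0 z w, ∀ Axw ∈ BB D M ε1 z0 x w,
      gfun G z0 C1 y * gfun G z0 C1 z * gfun G z0 C1 Axw ^ 2 /
          (gfun G z0 C1 Axy ^ 2 * gfun G z0 C1 Azw ^ 2) ≤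
        c * (max (rxy D x w / rxy D x y) 1) ^ γ * (max (rxy D x w / rxy D z w) 1) ^ γ := by
  obtain ⟨c1, hc1pos, hdom⟩ := hdom
  obtain ⟨c2, hc2pos, hratio⟩ := hratio
  have hM0 : 0 < M := by rw [hM]; positivity
  have hρ : 0 < rho D z0 := lt_trans (by positivity) hz0l
  have hC1pos : 0 < C1 := by rw [hC1]; positivity
  have gpos : ∀ x ∈ D, 0 < gfun G z0 C1 x := by
    intro x hx
    unfold gfun
    split_ifs with h
    · exact hC1pos
    · exact lt_min (hGpos x hx z0 hz0D h) hC1pos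
  refine ⟨c1 ^ 2 * c2 ^ 2, by positivity, ?_⟩
  intro x hx y hy z hz w hw Axy hAxy Azw hAzw Axw hAxw
  have hAxyD : Axy ∈ D := mem_of_mem_BB hz0D hAxy
  have hAzwD : Azw ∈ D := mem_of_mem_BB hz0D hAzw
  have hAxwD : Axw ∈ D := mem_of_mem_BB hz0D hAxw
  set gy := gfun G z0 C1 y
  set gz := gfun G z0 C1 z
  set gxy := gfun G z0 C1 Axy
  set gzw := gfun G z0 C1 Azw
  set gxw := gfun G z0 C1 Axw
  have hgy : 0 < gy := gpos y hy
  have hgz : 0 < gz := gpos z hz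
  have hgxy : 0 < gxy := gpos Axy hAxyD
  have hgzw : 0 < gzw := gpos Azw hAzwD
  have hgxw : 0 < gxw := gpos Axw hAxwD
  set M1 := max ((rxy D x w / rxy D x y) ^ γ) 1 with hM1
  set M2 := max ((rxy D x w / rxy D z w) ^ γ) 1 with hM2
  have hM1pos : (0:ℝ) < M1 := lt_of_lt_of_le one_pos (le_max_right _ _)
  have hM2pos : (0:ℝ) < M2 := lt_of_lt_of_le one_pos (le_max_right _ _)
  have h1 : gy ≤ c1 * gxy := le_trans (le_max_right _ _) (hdom x hx y hy Axy hAxy)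
  have h2 : gz ≤ c1 * gzw := le_trans (le_max_left _ _) (hdom z hz w hw Azw hAzw)
  have h3 : gxw ≤ c2 * M1 * gxy := by
    have hmem : Axy ∈ BB D M ε1 z0 y x := (BB_symm D M ε1 z0 x y) ▸ hAxy
    have := hratio y hy x hx w hw Axy hmem Axw hAxw
    rwa [rxy_symm D y x] at this
  have h4 : gxw ≤ c2 * M2 * gzw := by
    have hmem : Axw ∈ BB D M ε1 z0 w x := (BB_symm D M ε1 z0 x w) ▸ hAxw
    have := hratio z hz w hw x hx Azw hAzw Axw hmem
    rwa [rxy_symm D w x] at this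
  have hsq : gxw ^ 2 ≤ (c2 * M1 * gxy) * (c2 * M2 * gzw) := by
    rw [sq]
    exact mul_le_mul h3 h4 hgxw.le (by positivity)
  have hnum : gy * gz * gxw ^ 2 ≤
      (c1 * gxy) * (c1 * gzw) * ((c2 * M1 * gxy) * (c2 * M2 * gzw)) :=
    mul_le_mul (mul_le_mul h1 h2 hgz.le (by positivity)) hsq (by positivity)
      (by positivity)
  have hM1le : M1 ≤ (max (rxy D x w / rxy D x y) 1) ^ γ :=
    max_rpow_le (div_nonneg (rxy_nonneg D x w) (rxy_nonneg D x y)) hγ0.le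
  have hM2le : M2 ≤ (max (rxy D x w / rxy D z w) 1) ^ γ :=
    max_rpow_le (div_nonneg (rxy_nonneg D x w) (rxy_nonneg D z w)) hγ0.le
  rw [div_le_iff₀ (by positivity)]
  calc gy * gz * gxw ^ 2
      ≤ (c1 * gxy) * (c1 * gzw) * ((c2 * M1 * gxy) * (c2 * M2 * gzw)) := hnum
    _ = c1 ^ 2 * c2 ^ 2 * M1 * M2 * (gxy ^ 2 * gzw ^ 2) := by ring
    _ ≤ c1 ^ 2 * c2 ^ 2 * (max (rxy D x w / rxy D x y) 1) ^ γ *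
          (max (rxy D x w / rxy D z w) 1) ^ γ * (gxy ^ 2 * gzw ^ 2) := by
        gcongr
end
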